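/- If α ∈ ℝ \ [ψ̲, ψ̄], then for every s ≥ 0 and every K > D_ψ the sum Σ_{ω∈I^*, |S_ω(ψ−α)| ≤ K} exp(s·S_ω φ) is finite; in particular the α-Poincaré exponent satisfies δ_α = 0. -/

import Mathlib

open Filter MeasureTheory Set
open scoped BigOperators ENNReal Topology

namespace ThermoTransient

/-- The full shift space over the alphabet `I`. -/
abbrev Seq (I : Type*) : Type _ := ℕ → I

variable {I : Type*} [Fintype I]

/-- The left shift `σ`. -/
def shift (ω : Seq I) : Seq I := fun i => ω (i + 1)

/-- Birkhoff sums `S_n f`. -/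
noncomputable def birk (f : Seq I → ℝ) (n : ℕ) (ω : Seq I) : ℝ :=
  ∑ k ∈ Finset.range n, f (shift^[k] ω)

/-- The cylinder set of the finite word `w`. -/
def cyl (w : List I) : Set (Seq I) := {x | ∀ i : Fin w.length, x i.1 = w.get i}

/-- `S_ω f = sup_{x ∈ [ω]} S_{|ω|} f (x)`. -/
noncomputable def Sword (f : Seq I → ℝ) (w : List I) : ℝ :=
  sSup (birk f w.length '' cyl w)

/-- Hölder continuity with respect to the metric
`d(ω,τ) = exp(-max{k : ω and τ agree on the first k coordinates})`:
there are `a > 0` and a constant `C` with `|f ω - f τ| ≤ C * exp (-a n)` whenever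
`ω` and `τ` agree on the first `n` coordinates. -/
def Holder (f : Seq I → ℝ) : Prop :=
  ∃ a : ℝ, 0 < a ∧ ∃ C : ℝ, ∀ n : ℕ, ∀ ω τ : Seq I,
    (∀ j < n, ω j = τ j) → |f ω - f τ| ≤ C * Real.exp (-(a * n))

/-- The distortion constant `D_f`. -/
noncomputable def distortion (f : Seq I → ℝ) : ℝ :=
  sSup {r : ℝ | ∃ w : List I, w ≠ [] ∧ ∃ x ∈ cyl w, ∃ y ∈ cyl w,
    r = |birk f w.length x - birk f w.length y|}

/-- The prefix word `ω|_n`. -/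
def pre (ω : Seq I) (n : ℕ) : List I := List.ofFn fun k : Fin n => ω k.1

/-- The classical topological pressure `𝔓(f)`. -/
noncomputable def pressure (f : Seq I → ℝ) : ℝ :=
  limsup (fun n : ℕ => (n : ℝ)⁻¹ *
    Real.log (∑ u : Fin n → I, Real.exp (Sword f (List.ofFn u)))) atTop

/-- The classical topological pressure `𝔓(f, J)` restricted to the subshift over the
subalphabet `{i : I | p i}`. -/
noncomputable def pressureOn (p : I → Prop) (f : Seq I → ℝ) : ℝ :=
  letI := Classical.decPred p
  limsup (fun n : ℕ => (n : ℝ)⁻¹ *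
    Real.log (∑ u : Fin n → {i : I // p i},
      Real.exp (Sword f (List.ofFn fun k => (u k : I))))) atTop

/-- `ψ̲ = inf_ω liminf_n S_n ψ(ω)/n`. -/
noncomputable def psiLow (ψ : Seq I → ℝ) : ℝ :=
  ⨅ ω : Seq I, liminf (fun n : ℕ => birk ψ n ω / n) atTop

/-- `ψ̄ = sup_ω limsup_n S_n ψ(ω)/n`. -/
noncomputable def psiUpp (ψ : Seq I → ℝ) : ℝ :=
  ⨆ ω : Seq I, limsup (fun n : ℕ => birk ψ n ω / n) atTop

/-- The partition sum `ζ_n(f,ψ,K) = Σ_{ω ∈ C_n(ψ,K)} exp (S_ω f)`, where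
`C_n(ψ,K)` is the set of words of length `n` with `|S_ω ψ| ≤ K`. -/
noncomputable def Zn (f ψ : Seq I → ℝ) (K : ℝ) (n : ℕ) : ℝ :=
  ∑ u : Fin n → I,
    if |Sword ψ (List.ofFn u)| ≤ K then Real.exp (Sword f (List.ofFn u)) else 0

/-- `P(f,ψ,K) = limsup_n (1/n) log ζ_n(f,ψ,K)` (with value `⊥` contributed by empty
partition sums). -/
noncomputable def fibrePK (f ψ : Seq I → ℝ) (K : ℝ) : EReal :=
  limsup (fun n : ℕ => if Zn f ψ K n = 0 then (⊥ : EReal)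
    else (((n : ℝ)⁻¹ * Real.log (Zn f ψ K n) : ℝ) : EReal)) atTop

/-- The fibre-induced pressure `P(f,ψ) = lim_{K → ∞} P(f,ψ,K)`. -/
noncomputable def fibreP (f ψ : Seq I → ℝ) : EReal :=
  limsup (fun K : ℝ => fibrePK f ψ K) atTop

/-- The `α`-Poincaré exponent
`δ_α = inf {s ≥ 0 : Σ_{ω ∈ I^*, |S_ω (ψ - α)| ≤ K} exp (s S_ω φ) < ∞}`. -/
noncomputable def poincare (φ ψ : Seq I → ℝ) (α K : ℝ) : ℝ :=
  sInf {s : ℝ | 0 ≤ s ∧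
    Summable (fun w : {w : List I // |Sword (fun x => ψ x - α) w| ≤ K} =>
      Real.exp (s * Sword φ (w : List I)))}

/-- `μ` is the Gibbs measure of the potential `g`: a shift-invariant Borel probability
measure satisfying the Gibbs property. -/
def IsGibbs [MeasurableSpace I] (g : Seq I → ℝ) (μ : Measure (Seq I)) : Prop :=
  IsProbabilityMeasure μ ∧
  (∀ s : Set (Seq I), MeasurableSet s → μ (shift ⁻¹' s) = μ s) ∧
  ∃ c : ℝ, 1 ≤ c ∧ ∀ w : List I, w ≠ [] → ∀ x ∈ cyl w,
    (μ (cyl w)).toReal ≤ c * Real.exp (birk g w.length x - w.length * pressure g) ∧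
    c⁻¹ * Real.exp (birk g w.length x - w.length * pressure g) ≤ (μ (cyl w)).toReal

/-- Iterated composition `h_{ω₁} ∘ ⋯ ∘ h_{ωₙ}` of the inverse branches along a word. -/
def hcomp (h : I → ℝ → ℝ) : List I → ℝ → ℝ
  | [] => id
  | i :: w => h i ∘ hcomp h w

/-- An expanding interval map `F` with finitely many `C^{1+ε}` full branches on
pairwise disjoint subintervals of `[0,1]`, together with its inverse branches `h i`,
coding map `proj = π`, and an integer step length function `step = Ψ` constant on the
branch intervals. -/
structure ExpandingSystem (I : Type*) [Fintype I] where
  F : ℝ → ℝ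
  F' : ℝ → ℝ
  branch : I → Set ℝ
  step : ℝ → ℤ
  h : I → ℝ → ℝ
  proj : Seq I → ℝ
  two_le_card : 2 ≤ Fintype.card I
  branch_subset : ∀ i, branch i ⊆ Icc (0:ℝ) 1
  branch_ordConnected : ∀ i, (branch i).OrdConnected
  branch_interior : ∀ i, (interior (branch i)).Nonempty
  branch_disjoint : Pairwise fun i j => Disjoint (branch i) (branch j)
  branch_bij : ∀ i, BijOn F (branch i) (Icc (0:ℝ) 1)
  branch_deriv : ∀ i, ∀ x ∈ branch i, HasDerivWithinAt F (F' x) (branch i) x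
  expanding : ∀ i, ∀ x ∈ branch i, 1 < |F' x|
  deriv_holder : ∃ ε : ℝ, 0 < ε ∧ ∃ C : ℝ, ∀ i, ∀ x ∈ branch i, ∀ y ∈ branch i,
    |F' x - F' y| ≤ C * |x - y| ^ ε
  h_cont : ∀ i, ContinuousOn (h i) (Icc (0:ℝ) 1)
  h_maps : ∀ i, MapsTo (h i) (Icc (0:ℝ) 1) (closure (branch i))
  h_inv : ∀ i, ∀ x ∈ branch i, h i (F x) = x
  step_const : ∀ i, ∀ x ∈ branch i, ∀ y ∈ branch i, step x = step y
  proj_spec : ∀ ω : Seq I, (⋂ n : ℕ, hcomp h (pre ω n) '' Icc (0:ℝ) 1) = {proj ω}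

/-- The countable set `D = ⋃_{ω ∈ I^*} h_{ω₁} ∘ ⋯ ∘ h_{ωₙ}({0,1})`. -/
def ExpandingSystem.Dset (E : ExpandingSystem I) : Set ℝ :=
  ⋃ w : List I, hcomp E.h w '' ({0, 1} : Set ℝ)

/-- The set `R = (π(Σ) \ D) + ℤ`. -/
def ExpandingSystem.Rset (E : ExpandingSystem I) : Set ℝ :=
  {x : ℝ | ∃ k : ℤ, x - k ∈ range E.proj \ E.Dset}

/-- The `Ψ`-lift `F_Ψ(x) = k + F(x - k) + Ψ(x - k)` for the integer `k` with
`x - k ∈ [0,1]` (on `R` this integer is `⌊x⌋`). -/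
noncomputable def ExpandingSystem.lift (E : ExpandingSystem I) : ℝ → ℝ :=
  fun x => (⌊x⌋ : ℝ) + E.F (x - ⌊x⌋) + (E.step (x - ⌊x⌋) : ℝ)

/-- `φ` is a geometric potential for `E`: Hölder continuous, negative, and equal to
`-log |F'(π ω)|` except possibly on a finite set. -/
def ExpandingSystem.IsGeomPotential (E : ExpandingSystem I) (φ : Seq I → ℝ) : Prop :=
  Holder φ ∧ (∀ ω, φ ω < 0) ∧
    {ω : Seq I | φ ω ≠ -Real.log |E.F' (E.proj ω)|}.Finite

/-- `ψ` is a symbolic step length function for `E`: integer-valued, constant on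
one-cylinder sets, and equal to `Ψ ∘ π` except possibly on a finite set. -/
def ExpandingSystem.IsSymbolicStep (E : ExpandingSystem I) (ψ : Seq I → ℝ) : Prop :=
  (∀ ω, ∃ k : ℤ, ψ ω = (k : ℝ)) ∧ (∀ ω τ : Seq I, ω 0 = τ 0 → ψ ω = ψ τ) ∧
    {ω : Seq I | ψ ω ≠ (E.step (E.proj ω) : ℝ)}.Finite

end ThermoTransient

/-! If infinitely many words `w` had `|S_w (ψ - α)| ≤ K`, then for arbitrarily long such `w`
the periodic sequence `w w w ⋯` would have Birkhoff average of `ψ` within `(K + D)/|w|` of `α`,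
where `D` bounds the distortion of the Hölder function `ψ - α`. Birkhoff averages along a periodic
orbit converge, so these averages lie in `[ψ̲, ψ̄]`, and since this interval is closed it would
contain `α`. Hence only finitely many words enter the Poincaré series, which therefore converges
for every `s`. -/

namespace ThermoTransient

variable {I : Type*}

lemma iterate_shift_apply (ω : Seq I) (k i : ℕ) : shift^[k] ω i = ω (i + k) := by
  induction k generalizing ω with
  | zero => rfl
  | succ k ih =>
    rw [Function.iterate_succ_apply, ih (shift ω)]
    exact congrArg ω (by omega)

lemma birk_add (f : Seq I → ℝ) (m n : ℕ) (x : Seq I) :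
    birk f (m + n) x = birk f m x + birk f n (shift^[m] x) :=
  birkhoffSum_add shift f m n x

lemma birk_sub_const (f : Seq I → ℝ) (α : ℝ) (n : ℕ) (x : Seq I) :
    birk (fun t => f t - α) n x = birk f n x - n * α := by
  simp [birk, Finset.sum_sub_distrib, mul_comm]

lemma abs_birk_le {f : Seq I → ℝ} {M : ℝ} (hM : ∀ x, |f x| ≤ M) (n : ℕ) (x : Seq I) :
    |birk f n x| ≤ n * M :=
  calc |birk f n x| ≤ ∑ k ∈ Finset.range n, |f (shift^[k] x)| := Finset.abs_sum_le_sum_abs _ _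
    _ ≤ ∑ _k ∈ Finset.range n, M := Finset.sum_le_sum fun k _ => hM _
    _ = n * M := by simp

lemma eq_of_mem_cyl {w : List I} {x y : Seq I} (hx : x ∈ cyl w) (hy : y ∈ cyl w) :
    ∀ j < w.length, x j = y j :=
  fun j hj => (hx ⟨j, hj⟩).trans (hy ⟨j, hj⟩).symm

def periodicSeq (w : List I) (hw : 0 < w.length) : Seq I :=
  fun i => w.get ⟨i % w.length, Nat.mod_lt _ hw⟩

lemma periodicSeq_mem_cyl {w : List I} (hw : 0 < w.length) : periodicSeq w hw ∈ cyl w :=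
  fun i => congrArg w.get (Fin.ext (Nat.mod_eq_of_lt i.isLt))

lemma iterate_shift_periodicSeq {w : List I} (hw : 0 < w.length) :
    shift^[w.length] (periodicSeq w hw) = periodicSeq w hw := by
  funext i
  rw [iterate_shift_apply]
  exact congrArg w.get (Fin.ext (Nat.add_mod_right i _))

namespace Holder

variable {f : Seq I → ℝ}

lemma sub_const (hf : Holder f) (α : ℝ) : Holder fun x => f x - α := by
  obtain ⟨a, ha, C, hC⟩ := hf
  exact ⟨a, ha, C, fun n ω τ h => by simpa only [sub_sub_sub_cancel_right] using hC n ω τ h⟩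

lemma exists_abs_le [Nonempty I] (hf : Holder f) : ∃ M, ∀ x, |f x| ≤ M := by
  obtain ⟨a, -, C, hC⟩ := hf
  let x₀ : Seq I := fun _ => Classical.arbitrary I
  refine ⟨|f x₀| + C, fun x => ?_⟩
  have h := hC 0 x x₀ (fun j hj => absurd hj (Nat.not_lt_zero j))
  simp only [Nat.cast_zero, mul_zero, neg_zero, Real.exp_zero, mul_one] at h
  linarith [abs_sub_abs_le_abs_sub (f x) (f x₀)]

/-- The `k`-th terms of the two sums differ by `O(exp (-a (n - k)))`, a geometric sequence. -/
lemma exists_abs_birk_sub_le (hf : Holder f) :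
    ∃ D, ∀ (n : ℕ) (x y : Seq I), (∀ j < n, x j = y j) → |birk f n x - birk f n y| ≤ D := by
  obtain ⟨a, ha, C, hC⟩ := hf
  set r := Real.exp (-a)
  have hr0 : 0 < r := Real.exp_pos _
  have hr1 : r < 1 := Real.exp_lt_one_iff.mpr (neg_lt_zero.mpr ha)
  refine ⟨max C 0 * (1 / (1 - r)), fun n x y hxy => ?_⟩
  have hterm : ∀ k ∈ Finset.range n,
      |f (shift^[k] x) - f (shift^[k] y)| ≤ max C 0 * r ^ (n - 1 - k) := by
    intro k hk
    have hkn := Finset.mem_range.mp hk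
    have hagree : ∀ j < n - k, shift^[k] x j = shift^[k] y j := fun j hj => by
      rw [iterate_shift_apply, iterate_shift_apply]
      exact hxy (j + k) (by omega)
    have hexp : Real.exp (-(a * ((n - k : ℕ) : ℝ))) = r ^ (n - k) := by
      rw [← Real.exp_nat_mul]
      ring_nf
    calc |f (shift^[k] x) - f (shift^[k] y)| ≤ C * r ^ (n - k) := hexp ▸ hC _ _ _ hagree
      _ ≤ max C 0 * r ^ (n - k) := by gcongr; exact le_max_left _ _
      _ ≤ max C 0 * r ^ (n - 1 - k) :=
        mul_le_mul_of_nonneg_left (pow_le_pow_of_le_one hr0.le hr1.le (by omega))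
          (le_max_right _ _)
  calc |birk f n x - birk f n y|
      = |∑ k ∈ Finset.range n, (f (shift^[k] x) - f (shift^[k] y))| := by
        rw [birk, birk, ← Finset.sum_sub_distrib]
    _ ≤ ∑ k ∈ Finset.range n, max C 0 * r ^ (n - 1 - k) :=
        (Finset.abs_sum_le_sum_abs _ _).trans (Finset.sum_le_sum hterm)
    _ = max C 0 * ∑ k ∈ Finset.range n, r ^ k := by
        rw [← Finset.mul_sum, Finset.sum_range_reflect (r ^ ·)]
    _ ≤ max C 0 * (1 / (1 - r)) := by
        rw [Finset.range_eq_Ico, ← pow_zero r]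
        exact mul_le_mul_of_nonneg_left (geom_sum_Ico_le_of_lt_one hr0.le hr1) (le_max_right _ _)

end Holder

lemma abs_Sword_sub_birk_le {f : Seq I → ℝ} {D : ℝ}
    (hD : ∀ (n : ℕ) (x y : Seq I), (∀ j < n, x j = y j) → |birk f n x - birk f n y| ≤ D)
    {w : List I} {y : Seq I} (hy : y ∈ cyl w) : |Sword f w - birk f w.length y| ≤ D := by
  have hbound : ∀ v ∈ birk f w.length '' cyl w, v ≤ birk f w.length y + D := by
    rintro _ ⟨z, hz, rfl⟩
    linarith [(abs_le.mp (hD _ z y (eq_of_mem_cyl hz hy))).2]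
  have hmem : birk f w.length y ∈ birk f w.length '' cyl w := ⟨y, hy, rfl⟩
  have hle : birk f w.length y ≤ Sword f w := le_csSup ⟨_, hbound⟩ hmem
  have hge : Sword f w ≤ birk f w.length y + D := csSup_le ⟨_, hmem⟩ hbound
  have hD0 : 0 ≤ D := by simpa using hD 0 y y fun _ h => absurd h (Nat.not_lt_zero _)
  rw [abs_le]
  constructor <;> linarith

lemma birk_mul_of_iterate_eq {f : Seq I → ℝ} {n : ℕ} {y : Seq I} (hy : shift^[n] y = y)
    (q : ℕ) : birk f (n * q) y = q * birk f n y := by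
  induction q with
  | zero => simp [birk]
  | succ q ih =>
    have hfix : shift^[n * q] y = y := by
      rw [Function.iterate_mul]
      exact Function.IsFixedPt.iterate hy q
    rw [Nat.mul_succ, birk_add, hfix, ih]
    push_cast
    ring

lemma abs_birk_sub_mul_le_of_iterate_eq {f : Seq I → ℝ} {M : ℝ} (hM : ∀ x, |f x| ≤ M)
    {n : ℕ} (hn : 0 < n) {y : Seq I} (hy : shift^[n] y = y) (m : ℕ) :
    |birk f m y - m * (birk f n y / n)| ≤ 2 * n * M := by
  obtain ⟨q, r, hr, rfl⟩ : ∃ q r : ℕ, r < n ∧ n * q + r = m :=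
    ⟨m / n, m % n, Nat.mod_lt _ hn, Nat.div_add_mod m n⟩
  have hnR : (0 : ℝ) < n := by exact_mod_cast hn
  have hrn : (r : ℝ) ≤ n := by exact_mod_cast hr.le
  have hsplit : birk f (n * q + r) y - ((n * q + r : ℕ) : ℝ) * (birk f n y / n)
      = birk f r y - r / n * birk f n y := by
    rw [birk_add, Function.iterate_mul, (Function.IsFixedPt.iterate hy q).eq,
      birk_mul_of_iterate_eq hy]
    push_cast
    field_simp
    ring
  have hM0 : 0 ≤ M := (abs_nonneg _).trans (hM y)
  have hr : |birk f r y| ≤ n * M :=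
    (abs_birk_le hM r y).trans (mul_le_mul_of_nonneg_right hrn hM0)
  have hn' : |r / n * birk f n y| ≤ n * M := by
    rw [abs_mul, abs_of_nonneg (by positivity)]
    calc r / n * |birk f n y| ≤ 1 * |birk f n y| := by
          gcongr; exact div_le_one_of_le₀ hrn hnR.le
      _ ≤ n * M := by simpa using abs_birk_le hM n y
  rw [hsplit]
  linarith [abs_sub (birk f r y) (r / n * birk f n y)]

lemma tendsto_div_of_abs_sub_mul_le {u : ℕ → ℝ} {c B : ℝ} (h : ∀ m, |u m - m * c| ≤ B) :
    Tendsto (fun m : ℕ => u m / m) atTop (𝓝 c) := by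
  rw [← tendsto_sub_nhds_zero_iff]
  refine squeeze_zero_norm' ?_ (tendsto_const_div_atTop_nhds_zero_nat B)
  filter_upwards [eventually_gt_atTop 0] with m hm
  have hmR : (0 : ℝ) < m := by exact_mod_cast hm
  rw [Real.norm_eq_abs, show u m / m - c = (u m - m * c) / m by field_simp, abs_div,
    Nat.abs_cast]
  exact div_le_div_of_nonneg_right (h m) hmR.le

lemma abs_birk_div_le {f : Seq I → ℝ} {M : ℝ} (hM : ∀ x, |f x| ≤ M) (m : ℕ) (x : Seq I) :
    |birk f m x / m| ≤ M := by
  rcases Nat.eq_zero_or_pos m with rfl | hm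
  · simpa [birk] using (abs_nonneg _).trans (hM x)
  · have hmR : (0 : ℝ) < m := by exact_mod_cast hm
    rw [abs_div, Nat.abs_cast, div_le_iff₀ hmR, mul_comm]
    exact abs_birk_le hM m x

lemma psiLow_le_of_tendsto {ψ : Seq I → ℝ} {M : ℝ} (hM : ∀ x, |ψ x| ≤ M) {y : Seq I} {c : ℝ}
    (hc : Tendsto (fun m : ℕ => birk ψ m y / m) atTop (𝓝 c)) : psiLow ψ ≤ c := by
  have hbdd : BddBelow (range fun ω : Seq I => liminf (fun m : ℕ => birk ψ m ω / m) atTop) := by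
    refine ⟨-M, ?_⟩
    rintro _ ⟨ω, rfl⟩
    have h := fun m => abs_le.mp (abs_birk_div_le hM m ω)
    exact le_liminf_of_le (isCoboundedUnder_ge_of_le atTop fun m => (h m).2)
      (Eventually.of_forall fun m => (h m).1)
  exact hc.liminf_eq ▸ ciInf_le hbdd y

lemma le_psiUpp_of_tendsto {ψ : Seq I → ℝ} {M : ℝ} (hM : ∀ x, |ψ x| ≤ M) {y : Seq I} {c : ℝ}
    (hc : Tendsto (fun m : ℕ => birk ψ m y / m) atTop (𝓝 c)) : c ≤ psiUpp ψ := by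
  have hbdd : BddAbove (range fun ω : Seq I => limsup (fun m : ℕ => birk ψ m ω / m) atTop) := by
    refine ⟨M, ?_⟩
    rintro _ ⟨ω, rfl⟩
    have h := fun m => abs_le.mp (abs_birk_div_le hM m ω)
    exact limsup_le_of_le (isCoboundedUnder_le_of_le atTop fun m => (h m).1)
      (Eventually.of_forall fun m => (h m).2)
  exact hc.limsup_eq ▸ le_ciSup hbdd y

lemma birk_div_mem_Icc_of_iterate_eq {ψ : Seq I → ℝ} {M : ℝ} (hM : ∀ x, |ψ x| ≤ M)
    {n : ℕ} (hn : 0 < n) {y : Seq I} (hy : shift^[n] y = y) :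
    birk ψ n y / n ∈ Icc (psiLow ψ) (psiUpp ψ) :=
  have hc := tendsto_div_of_abs_sub_mul_le (abs_birk_sub_mul_le_of_iterate_eq hM hn hy)
  ⟨psiLow_le_of_tendsto hM hc, le_psiUpp_of_tendsto hM hc⟩

lemma finite_setOf_abs_Sword_sub_const_le [Finite I] {ψ : Seq I → ℝ} (hψ : Holder ψ) {α : ℝ}
    (hα : α ∉ Icc (psiLow ψ) (psiUpp ψ)) (K : ℝ) :
    {w : List I | |Sword (fun x => ψ x - α) w| ≤ K}.Finite := by
  by_contra hinf
  apply hα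
  rw [← isClosed_Icc.closure_eq, Metric.mem_closure_iff]
  intro ε hε
  obtain ⟨D, hD⟩ := (hψ.sub_const α).exists_abs_birk_sub_le
  obtain ⟨N, hN⟩ := exists_nat_gt ((K + D) / ε)
  obtain ⟨w, hwK, hwN⟩ := (Set.Infinite.sdiff hinf (List.finite_length_le I N)).nonempty
  replace hwN : N < w.length := not_le.mp hwN
  have hw : 0 < w.length := by omega
  have : Nonempty I := ⟨w.get ⟨0, hw⟩⟩
  obtain ⟨M, hM⟩ := hψ.exists_abs_le
  set n := w.length
  set y := periodicSeq w hw
  refine ⟨birk ψ n y / n, birk_div_mem_Icc_of_iterate_eq hM hw (iterate_shift_periodicSeq hw), ?_⟩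
  have hnR : (0 : ℝ) < n := by exact_mod_cast hw
  have hclose : |birk ψ n y - n * α| ≤ K + D := by
    have h := abs_Sword_sub_birk_le hD (periodicSeq_mem_cyl hw)
    rw [birk_sub_const] at h
    set S := Sword (fun x => ψ x - α) w
    calc |birk ψ n y - n * α| = |S - (S - (birk ψ n y - n * α))| := by ring_nf
      _ ≤ |S| + |S - (birk ψ n y - n * α)| := abs_sub _ _
      _ ≤ K + D := add_le_add hwK h
  have hKD : K + D < ε * n := by
    rw [div_lt_iff₀ hε] at hN
    nlinarith [(Nat.cast_lt (α := ℝ)).mpr hwN]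
  rw [Real.dist_eq, abs_sub_comm,
    show birk ψ n y / n - α = (birk ψ n y - n * α) / n by field_simp, abs_div,
    Nat.abs_cast, div_lt_iff₀ hnR]
  linarith

theorem statement4_general {I : Type*} [Fintype I] (φ ψ : Seq I → ℝ)
    (hψH : Holder ψ)
    (α : ℝ) (hα : α ∉ Icc (psiLow ψ) (psiUpp ψ)) :
    (∀ s : ℝ, 0 ≤ s → ∀ K : ℝ, distortion ψ < K →
        Summable (fun w : {w : List I // |Sword (fun x => ψ x - α) w| ≤ K} =>
          Real.exp (s * Sword φ (w : List I)))) ∧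
      ∀ K : ℝ, distortion ψ < K → poincare φ ψ α K = 0 := by
  have hsummable : ∀ s K, Summable fun w : {w : List I // |Sword (fun x => ψ x - α) w| ≤ K} =>
      Real.exp (s * Sword φ (w : List I)) := fun s K => by
    have : Finite {w : List I // |Sword (fun x => ψ x - α) w| ≤ K} :=
      (finite_setOf_abs_Sword_sub_const_le hψH hα K).to_subtype
    exact Summable.of_finite
  refine ⟨fun s _ K _ => hsummable s K, fun K _ => ?_⟩
  have hset : {s : ℝ | 0 ≤ s ∧
      Summable fun w : {w : List I // |Sword (fun x => ψ x - α) w| ≤ K} =>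
        Real.exp (s * Sword φ (w : List I))} = Ici 0 :=
    Set.ext fun s => and_iff_left (hsummable s K)
  rw [poincare, hset, csInf_Ici]

/-- implication (1.4): if `α ∉ [ψ̲, ψ̄]` then the Poincaré series
converges for every `s ≥ 0` and every `K > D_ψ`, and hence `δ_α = 0`. -/
theorem statement4 {I : Type*} [Fintype I] (φ ψ : Seq I → ℝ)
    (hφH : Holder φ) (hφneg : ∀ ω, φ ω < 0) (hψH : Holder ψ)
    (α : ℝ) (hα : α ∉ Icc (psiLow ψ) (psiUpp ψ)) :
    (∀ s : ℝ, 0 ≤ s → ∀ K : ℝ, distortion ψ < K →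
        Summable (fun w : {w : List I // |Sword (fun x => ψ x - α) w| ≤ K} =>
          Real.exp (s * Sword φ (w : List I)))) ∧
      ∀ K : ℝ, distortion ψ < K → poincare φ ψ α K = 0 :=
  statement4_general φ ψ hψH α hα

end ThermoTransient
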